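/- arXiv:1610.09600 — 4 statements merged into one kernel-verified Lean document; each statement's English description precedes it below -/
import Mathlib

section
/- For the Hann window with Fourier transform w̃(ν) = (T/2)·e^{-iπTν}·sinc(Tν)/(1-(Tν)²) (suitably interpreted at Tν ∈ {0, ±1}), the bounds (1/2)(1 - (3/2)(Tν)²) ≤ |w̃(ν)|/T ≤ (1/2)(1 - (1/4)(Tν)²) hold for all ν with |Tν| ≤ 2/√3. -/
open Real Complex

/-- The Fourier transform of the Hann window `w(t) = sin²(πt/T)·1_[0,T](t)`. -/
noncomputable def hannFT (T : ℝ) (ν : ℝ) : ℂ :=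
  ∫ t in (0:ℝ)..T, Complex.exp (-2 * Real.pi * Complex.I * ν * t) * ((Real.sin (Real.pi * t / T) : ℂ)) ^ 2

/-!
Substituting `t = T s` gives `w̃(ν) = T · w̃₁(Tν)` for the unit window, and centring the unit
window at `s = 1/2` gives `w̃₁(x) = e^{-iπx} H(x)` with
`H(x) = ∫₀¹ cos(2πx(s - 1/2)) sin²(πs) ds` real, because the sine part of the integrand is odd
about `s = 1/2`. Bounding the cosine between its Taylor polynomials
`1 - u²/2 ≤ cos u ≤ 1 - u²/2 + u⁴/24` reduces `H` to the moments
`∫₀¹ (s - 1/2)^{2k} sin²(πs) ds`, `k = 0, 1, 2`, which have closed forms. This gives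
`1/2 - (π²/12 - 1/2) x² ≤ H(x) ≤ 1/2 - (π²/12 - 1/2) x² + (π⁴/240 - π²/12 + 1/2) x⁴`,
and the claim follows on `x² ≤ 4/3` from `3.14 < π < 3.15`.
-/

theorem Real.cos_le_one_sub_sq_div_two_add_pow_four_div (x : ℝ) :
    cos x ≤ 1 - x ^ 2 / 2 + x ^ 4 / 24 := by
  wlog hx : 0 ≤ x generalizing x
  · simpa [cos_neg, even_two.neg_pow, (by decide : Even 4).neg_pow] using this (-x) (by linarith)
  have hderiv (y : ℝ) : HasDerivAt (fun y => 1 - y ^ 2 / 2 + y ^ 4 / 24 - cos y)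
      (sin y - (y - y ^ 3 / 6)) y := by
    refine ((((hasDerivAt_pow 2 y).div_const 2).const_sub 1).add
      ((hasDerivAt_pow 4 y).div_const 24)).sub (hasDerivAt_cos y) |>.congr_deriv ?_
    norm_num; ring
  have hmono : MonotoneOn (fun y => 1 - y ^ 2 / 2 + y ^ 4 / 24 - cos y) (Set.Ici 0) :=
    monotoneOn_of_deriv_nonneg (convex_Ici 0) (by fun_prop)
      (fun y _ => (hderiv y).differentiableAt.differentiableWithinAt)
      (fun y hy => (hderiv y).deriv ▸ sub_nonneg.2 (sin_ge_sub_cube (interior_subset hy)))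
  simpa using hmono Set.self_mem_Ici hx hx

theorem intervalIntegral.integral_eq_zero_of_comp_sub_left_eq_neg {E : Type*}
    [NormedAddCommGroup E] [NormedSpace ℝ E] {f : ℝ → E} {a b : ℝ}
    (hf : ∀ x, f (a + b - x) = -f x) : ∫ x in a..b, f x = 0 := by
  have : IsAddTorsionFree E := .of_isTorsionFree ℝ E
  rw [← self_eq_neg, ← intervalIntegral.integral_neg]
  simp_rw [← hf]
  rw [intervalIntegral.integral_comp_sub_left]
  simp

theorem hannFT_eq_mul_hannFT_one {T : ℝ} (hT : T ≠ 0) (ν : ℝ) :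
    hannFT T ν = T * hannFT 1 (T * ν) := by
  have hscale := intervalIntegral.smul_integral_comp_mul_right (a := 0) (b := 1)
    (fun t : ℝ => Complex.exp (-2 * π * I * ν * t) * (Real.sin (π * t / T) : ℂ) ^ 2) T
  rw [zero_mul, one_mul] at hscale
  rw [hannFT, ← hscale, hannFT, Complex.real_smul]
  congr 1
  refine intervalIntegral.integral_congr fun s _ => ?_
  simp only [mul_div_assoc, div_one, mul_div_cancel_right₀ _ hT]
  push_cast
  ring_nf

noncomputable def centeredHannFT (x : ℝ) : ℝ :=
  ∫ s in (0:ℝ)..1, Real.cos (2 * π * x * (s - 1 / 2)) * Real.sin (π * s) ^ 2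

theorem exp_mul_hannFT_one (x : ℝ) :
    Complex.exp (π * x * I) * hannFT 1 x = centeredHannFT x := by
  have hodd : ∫ s in (0:ℝ)..1, Real.sin (2 * π * x * (s - 1 / 2)) * Real.sin (π * s) ^ 2 = 0 :=
    intervalIntegral.integral_eq_zero_of_comp_sub_left_eq_neg fun s => by
      rw [show 2 * π * x * (0 + 1 - s - 1 / 2) = -(2 * π * x * (s - 1 / 2)) by ring,
        show π * (0 + 1 - s) = π - π * s by ring, Real.sin_neg, Real.sin_pi_sub, neg_mul]
  have hsplit : Complex.exp (π * x * I) * hannFT 1 x =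
      ∫ s in (0:ℝ)..1, ((Real.cos (2 * π * x * (s - 1 / 2)) * Real.sin (π * s) ^ 2 : ℝ) : ℂ)
        - ((Real.sin (2 * π * x * (s - 1 / 2)) * Real.sin (π * s) ^ 2 : ℝ) : ℂ) * I := by
    rw [hannFT, ← intervalIntegral.integral_const_mul]
    refine intervalIntegral.integral_congr fun s _ => ?_
    rw [← mul_assoc, ← Complex.exp_add,
      show π * x * I + -2 * π * I * x * s = ((-(2 * π * x * (s - 1 / 2)) : ℝ) : ℂ) * I by
        push_cast; ring,
      Complex.exp_mul_I, ← Complex.ofReal_cos, ← Complex.ofReal_sin, Real.cos_neg, Real.sin_neg,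
      div_one]
    push_cast
    ring
  rw [hsplit, intervalIntegral.integral_sub, intervalIntegral.integral_mul_const,
    intervalIntegral.integral_ofReal, intervalIntegral.integral_ofReal, hodd, centeredHannFT]
  · simp
  all_goals exact (Continuous.intervalIntegrable (by fun_prop) _ _)

theorem norm_hannFT {T : ℝ} (hT : 0 < T) (ν : ℝ) :
    ‖hannFT T ν‖ = T * |centeredHannFT (T * ν)| := by
  rw [hannFT_eq_mul_hannFT_one hT.ne', norm_mul, Complex.norm_real, Real.norm_of_nonneg hT.le,
    ← Real.norm_eq_abs, ← Complex.norm_real, ← exp_mul_hannFT_one, norm_mul,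
    show (π : ℂ) * ((T * ν : ℝ) : ℂ) * I = ((π * (T * ν) : ℝ) : ℂ) * I by push_cast; ring,
    Complex.norm_exp_ofReal_mul_I, one_mul]

theorem integral_sin_pi_mul_sq : ∫ s in (0:ℝ)..1, Real.sin (π * s) ^ 2 = 1 / 2 := by
  rw [intervalIntegral.integral_comp_mul_left (fun s => Real.sin s ^ 2) pi_ne_zero, integral_sin_sq]
  simp
  field_simp

theorem integral_sq_mul_sin_pi_mul_sq :
    ∫ s in (0:ℝ)..1, (s - 1 / 2) ^ 2 * Real.sin (π * s) ^ 2 = 1 / 24 - 1 / (4 * π ^ 2) := by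
  have hF (s : ℝ) : HasDerivAt (fun s => (s - 1 / 2) ^ 3 / 6 -
      ((s - 1 / 2) ^ 2 * Real.sin (2 * π * s) / (4 * π)
        + (s - 1 / 2) * Real.cos (2 * π * s) / (4 * π ^ 2)
        - Real.sin (2 * π * s) / (8 * π ^ 3)))
      ((s - 1 / 2) ^ 2 * Real.sin (π * s) ^ 2) s := by
    have hlin := (hasDerivAt_id s).sub_const (1 / 2)
    have hsin := ((hasDerivAt_id s).const_mul (2 * π)).sin
    have hcos := ((hasDerivAt_id s).const_mul (2 * π)).cos
    refine ((hlin.pow 3).div_const 6).sub ((((hlin.pow 2).mul hsin).div_const (4 * π)).add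
      ((hlin.mul hcos).div_const (4 * π ^ 2)) |>.sub (hsin.div_const (8 * π ^ 3)))
      |>.congr_deriv ?_
    have hdouble : Real.cos (2 * π * s) = 1 - 2 * Real.sin (π * s) ^ 2 := by
      rw [mul_assoc, Real.cos_two_mul_eq_one_sub]
    simp only [id_eq, Pi.pow_apply, hdouble]
    field_simp
    ring
  rw [intervalIntegral.integral_eq_sub_of_hasDerivAt (fun s _ => hF s)
    (Continuous.intervalIntegrable (by fun_prop) _ _)]
  norm_num
  field_simp
  ring

theorem integral_pow_four_mul_sin_pi_mul_sq :
    ∫ s in (0:ℝ)..1, (s - 1 / 2) ^ 4 * Real.sin (π * s) ^ 2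
      = 1 / 160 - 1 / (8 * π ^ 2) + 3 / (4 * π ^ 4) := by
  have hF (s : ℝ) : HasDerivAt (fun s => (s - 1 / 2) ^ 5 / 10 -
      ((s - 1 / 2) ^ 4 * Real.sin (2 * π * s) / (4 * π)
        + (s - 1 / 2) ^ 3 * Real.cos (2 * π * s) / (2 * π ^ 2)
        - 3 * ((s - 1 / 2) ^ 2 * Real.sin (2 * π * s)) / (4 * π ^ 3)
        - 3 * ((s - 1 / 2) * Real.cos (2 * π * s)) / (4 * π ^ 4)
        + 3 * Real.sin (2 * π * s) / (8 * π ^ 5)))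
      ((s - 1 / 2) ^ 4 * Real.sin (π * s) ^ 2) s := by
    have hlin := (hasDerivAt_id s).sub_const (1 / 2)
    have hsin := ((hasDerivAt_id s).const_mul (2 * π)).sin
    have hcos := ((hasDerivAt_id s).const_mul (2 * π)).cos
    refine ((hlin.pow 5).div_const 10).sub
      ((((((hlin.pow 4).mul hsin).div_const (4 * π)).add
        (((hlin.pow 3).mul hcos).div_const (2 * π ^ 2))).sub
        ((((hlin.pow 2).mul hsin).const_mul 3).div_const (4 * π ^ 3))).sub
        (((hlin.mul hcos).const_mul 3).div_const (4 * π ^ 4)) |>.add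
        ((hsin.const_mul 3).div_const (8 * π ^ 5))) |>.congr_deriv ?_
    have hdouble : Real.cos (2 * π * s) = 1 - 2 * Real.sin (π * s) ^ 2 := by
      rw [mul_assoc, Real.cos_two_mul_eq_one_sub]
    simp only [id_eq, Pi.pow_apply, hdouble]
    field_simp
    ring
  rw [intervalIntegral.integral_eq_sub_of_hasDerivAt (fun s _ => hF s)
    (Continuous.intervalIntegrable (by fun_prop) _ _)]
  norm_num
  field_simp
  ring

theorem integral_even_quartic_mul_sin_pi_mul_sq (a b c : ℝ) :
    ∫ s in (0:ℝ)..1, (a + b * (s - 1 / 2) ^ 2 + c * (s - 1 / 2) ^ 4) * Real.sin (π * s) ^ 2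
      = a / 2 + b * (1 / 24 - 1 / (4 * π ^ 2))
        + c * (1 / 160 - 1 / (8 * π ^ 2) + 3 / (4 * π ^ 4)) := by
  simp_rw [add_mul, mul_assoc]
  rw [intervalIntegral.integral_add, intervalIntegral.integral_add,
    intervalIntegral.integral_const_mul, intervalIntegral.integral_const_mul,
    intervalIntegral.integral_const_mul, integral_sin_pi_mul_sq, integral_sq_mul_sin_pi_mul_sq,
    integral_pow_four_mul_sin_pi_mul_sq]
  · ring
  all_goals exact Continuous.intervalIntegrable (by fun_prop) _ _

theorem one_half_sub_le_centeredHannFT (x : ℝ) :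
    1 / 2 - (π ^ 2 / 12 - 1 / 2) * x ^ 2 ≤ centeredHannFT x := by
  calc 1 / 2 - (π ^ 2 / 12 - 1 / 2) * x ^ 2
      = ∫ s in (0:ℝ)..1, (1 + -(2 * π ^ 2 * x ^ 2) * (s - 1 / 2) ^ 2 + 0 * (s - 1 / 2) ^ 4)
          * Real.sin (π * s) ^ 2 := by
        rw [integral_even_quartic_mul_sin_pi_mul_sq]
        field_simp
        ring
    _ ≤ centeredHannFT x :=
      intervalIntegral.integral_mono_on zero_le_one
        (Continuous.intervalIntegrable (by fun_prop) _ _)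
        (Continuous.intervalIntegrable (by fun_prop) _ _) fun s _ =>
          mul_le_mul_of_nonneg_right
            ((by ring : _ = 1 - (2 * π * x * (s - 1 / 2)) ^ 2 / 2).trans_le
              one_sub_sq_div_two_le_cos) (sq_nonneg _)

theorem centeredHannFT_le_one_half_sub_add (x : ℝ) :
    centeredHannFT x ≤
      1 / 2 - (π ^ 2 / 12 - 1 / 2) * x ^ 2 + (π ^ 4 / 240 - π ^ 2 / 12 + 1 / 2) * x ^ 4 := by
  calc centeredHannFT x
      ≤ ∫ s in (0:ℝ)..1, (1 + -(2 * π ^ 2 * x ^ 2) * (s - 1 / 2) ^ 2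
          + 2 * π ^ 4 * x ^ 4 / 3 * (s - 1 / 2) ^ 4) * Real.sin (π * s) ^ 2 :=
      intervalIntegral.integral_mono_on zero_le_one
        (Continuous.intervalIntegrable (by fun_prop) _ _)
        (Continuous.intervalIntegrable (by fun_prop) _ _) fun s _ =>
          mul_le_mul_of_nonneg_right
            ((cos_le_one_sub_sq_div_two_add_pow_four_div _).trans_eq (by ring)) (sq_nonneg _)
    _ = 1 / 2 - (π ^ 2 / 12 - 1 / 2) * x ^ 2 + (π ^ 4 / 240 - π ^ 2 / 12 + 1 / 2) * x ^ 4 := by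
        rw [integral_even_quartic_mul_sin_pi_mul_sq]
        field_simp
        ring

theorem centeredHannFT_nonneg {x : ℝ} (hx : x ^ 2 ≤ 4 / 3) : 0 ≤ centeredHannFT x := by
  have hπ2 : π ^ 2 < 9.93 := by nlinarith [pi_lt_d2, pi_pos]
  nlinarith [one_half_sub_le_centeredHannFT x, sq_nonneg x]

theorem centeredHannFT_quad_bounds {x : ℝ} (hx : x ^ 2 ≤ 4 / 3) :
    1 / 2 * (1 - 3 / 2 * x ^ 2) ≤ centeredHannFT x ∧
      centeredHannFT x ≤ 1 / 2 * (1 - 1 / 4 * x ^ 2) := by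
  have hπ2_lt : π ^ 2 < 9.93 := by nlinarith [pi_lt_d2, pi_pos]
  have hπ2_gt : 9.85 < π ^ 2 := by nlinarith [pi_gt_d2]
  have hquartic : 0 ≤ π ^ 4 / 240 - π ^ 2 / 12 + 1 / 2 := by nlinarith [sq_nonneg (π ^ 2 - 10)]
  have hgap : 4 / 3 * (π ^ 4 / 240 - π ^ 2 / 12 + 1 / 2) ≤ π ^ 2 / 12 - 1 / 2 - 1 / 8 := by
    nlinarith [mul_pos (sub_pos.2 hπ2_gt) (sub_pos.2 hπ2_lt)]
  have hlower := one_half_sub_le_centeredHannFT x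
  have hupper := centeredHannFT_le_one_half_sub_add x
  refine ⟨by nlinarith [sq_nonneg x], ?_⟩
  nlinarith [mul_le_mul_of_nonneg_left hx (mul_nonneg hquartic (sq_nonneg x)),
    mul_le_mul_of_nonneg_left hgap (sq_nonneg x)]

/-- Quadratic bounds on the modulus of the Hann window spectrum near the origin:
`(1/2)(1 - (3/2)(Tν)²) ≤ |w̃(ν)|/T ≤ (1/2)(1 - (1/4)(Tν)²)` for `|Tν| ≤ 2/√3`. -/
theorem hannFT_quad_bounds (T : ℝ) (hT : 0 < T) (ν : ℝ) (hν : |T * ν| ≤ 2 / Real.sqrt 3) :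
    (1 / 2) * (1 - (3 / 2) * (T * ν) ^ 2) ≤ ‖hannFT T ν‖ / T ∧
    ‖hannFT T ν‖ / T ≤ (1 / 2) * (1 - (1 / 4) * (T * ν) ^ 2) := by
  have hx : (T * ν) ^ 2 ≤ 4 / 3 := by
    calc (T * ν) ^ 2 = |T * ν| ^ 2 := (sq_abs _).symm
      _ ≤ (2 / √3) ^ 2 := by gcongr
      _ = 4 / 3 := by rw [div_pow, sq_sqrt zero_le_three]; norm_num
  rw [norm_hannFT hT, mul_div_cancel_left₀ _ hT.ne', abs_of_nonneg (centeredHannFT_nonneg hx)]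
  exact centeredHannFT_quad_bounds hx
end

section
/- The series Σ_{m=1}^∞ 1/((m - 1/4)(m - 1/2)(m - 3/4)) converges and equals 16·log 2. -/
/-!
Partial fractions give `1/((m+3/4)(m+1/2)(m+1/4)) = 32/(4m+1) - 64/(4m+2) + 32/(4m+3)`,
so the `n`-th partial sum is `32 H(4n) - 48 H(2n) + 16 H(n)` in harmonic numbers.
Since `H(kn) - H(n) → log k` (both differ from `log` by `γ + o(1)`), the partial sums tend to
`32 log 4 - 48 log 2 = 16 log 2`, and the terms are positive.
-/

open Filter Topology Finset

theorem tendsto_harmonic_mul_sub_harmonic {k : ℕ} (hk : 0 < k) :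
    Tendsto (fun n : ℕ => (harmonic (k * n) : ℝ) - harmonic n) atTop (𝓝 (Real.log k)) := by
  have hkn : Tendsto (fun n : ℕ => (harmonic (k * n) : ℝ) - Real.log (k * n : ℕ)) atTop
      (𝓝 Real.eulerMascheroniConstant) :=
    Real.tendsto_harmonic_sub_log.comp (tendsto_id.const_mul_atTop' hk)
  have hlim := (hkn.sub Real.tendsto_harmonic_sub_log).add_const (Real.log k)
  rw [sub_self, zero_add] at hlim
  refine hlim.congr' ?_
  filter_upwards [eventually_gt_atTop 0] with n hn
  push_cast
  rw [Real.log_mul (by positivity) (by positivity)]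
  ring

theorem sum_range_leakage (n : ℕ) :
    ∑ m ∈ range n, 1 / (((m : ℝ) + 3 / 4) * ((m : ℝ) + 1 / 2) * ((m : ℝ) + 1 / 4)) =
      32 * harmonic (4 * n) - 48 * harmonic (2 * n) + 16 * harmonic n := by
  induction n with
  | zero => simp
  | succ n ih =>
    rw [sum_range_succ, ih, show 4 * (n + 1) = 4 * n + 1 + 1 + 1 + 1 by ring,
      show 2 * (n + 1) = 2 * n + 1 + 1 by ring]
    simp only [harmonic_succ]
    push_cast
    field_simp
    ring

/-- `Σ_{m=1}^∞ 1/((m - 1/4)(m - 1/2)(m - 3/4)) = 16 log 2`, the sum being convergent. -/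
theorem tsum_leakage_series :
    Summable (fun m : ℕ =>
      1 / (((m : ℝ) + 3 / 4) * ((m : ℝ) + 1 / 2) * ((m : ℝ) + 1 / 4))) ∧
    ∑' m : ℕ, 1 / (((m : ℝ) + 3 / 4) * ((m : ℝ) + 1 / 2) * ((m : ℝ) + 1 / 4)) =
      16 * Real.log 2 := by
  have hlim : Tendsto (fun n : ℕ => 32 * ((harmonic (4 * n) : ℝ) - harmonic n)
      - 48 * ((harmonic (2 * n) : ℝ) - harmonic n)) atTop
      (𝓝 (32 * Real.log 4 - 48 * Real.log 2)) :=
    ((tendsto_harmonic_mul_sub_harmonic (by norm_num)).const_mul 32).sub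
      ((tendsto_harmonic_mul_sub_harmonic (by norm_num)).const_mul 48)
  have hlog4 : Real.log 4 = 2 * Real.log 2 := by
    rw [show (4 : ℝ) = 2 ^ 2 by norm_num, Real.log_pow, Nat.cast_ofNat]
  have hsum : HasSum (fun m : ℕ =>
      1 / (((m : ℝ) + 3 / 4) * ((m : ℝ) + 1 / 2) * ((m : ℝ) + 1 / 4))) (16 * Real.log 2) := by
    rw [hasSum_iff_tendsto_nat_of_nonneg (fun m => by positivity)]
    simp_rw [sum_range_leakage]
    convert hlim using 2 with n
    · ring
    · rw [hlog4]; ring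
  exact ⟨hsum.summable, hsum.tsum_eq⟩
end

section
/- Consider the windowed point-process spectrum H(ν) = (1/T)(Σ_{k=0}^p c_k w̃(ν - ν_k) + ε̃(ν)), where |w̃(ν)| ≤ φ(|ν|) for a nonincreasing envelope φ, and the signal frequencies satisfy min_{k≠k'}|ν_k - ν_{k'}| ≥ 4/T. If ν is at distance at least 2/T from every ν_k, then |H(ν)| ≤ ‖c‖_∞ · (2/T)·Σ_{l=0}^∞ φ(2/T + 4l/T) + sup_ν |ε̃(ν)|/T. -/
/-!
Sort the signal frequencies into those above and those below `ν`. On one side, the distances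
`|ν - ν_k|` are at least `2/T` and pairwise `4/T`-separated, so the slot index
`⌊(|ν - ν_k| - 2/T) / (4/T)⌋₊` is injective there and, `φ` being nonincreasing,
`φ |ν - ν_k| ≤ φ (2/T + 4l/T)` for its slot `l`. Each side thus contributes at most
`Σ_l φ (2/T + 4l/T)`.
-/

open Finset

section Packing

variable {ι : Type*} {s : Finset ι} {a δ : ℝ} {φ : ℝ → ℝ}

lemma injOn_floor_div_of_separated {d : ι → ℝ} (hδ : 0 < δ) (ha : ∀ k ∈ s, a ≤ d k)
    (hsep : ∀ k ∈ s, ∀ k' ∈ s, k ≠ k' → δ ≤ |d k - d k'|) :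
    Set.InjOn (fun k => ⌊(d k - a) / δ⌋₊) s := by
  intro k hk k' hk' hfloor
  by_contra hne
  have hnonneg : ∀ j ∈ s, 0 ≤ (d j - a) / δ := fun j hj =>
    div_nonneg (sub_nonneg.mpr (ha j hj)) hδ.le
  have hint : ⌊(d k - a) / δ⌋ = ⌊(d k' - a) / δ⌋ := by
    rw [← Int.natCast_floor_eq_floor (hnonneg k hk),
      ← Int.natCast_floor_eq_floor (hnonneg k' hk')]
    exact congrArg _ hfloor
  have hclose := Int.abs_sub_lt_one_of_floor_eq_floor hint
  rw [← sub_div, sub_sub_sub_cancel_right, abs_div, abs_of_pos hδ, div_lt_one hδ] at hclose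
  exact (hsep k hk k' hk' hne).not_gt hclose

lemma sum_le_tsum_of_separated {d : ι → ℝ} (hδ : 0 < δ) (ha : ∀ k ∈ s, a ≤ d k)
    (hsep : ∀ k ∈ s, ∀ k' ∈ s, k ≠ k' → δ ≤ |d k - d k'|)
    (hφ_anti : AntitoneOn φ (Set.Ici a)) (hφ_nonneg : ∀ x, 0 ≤ φ x)
    (hsum : Summable fun l : ℕ => φ (a + δ * l)) :
    ∑ k ∈ s, φ (d k) ≤ ∑' l : ℕ, φ (a + δ * l) := by
  set slot : ι → ℕ := fun k => ⌊(d k - a) / δ⌋₊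
  have hslot : ∀ k ∈ s, a + δ * slot k ≤ d k := fun k hk => by
    have : (slot k : ℝ) * δ ≤ d k - a :=
      (le_div_iff₀ hδ).mp (Nat.floor_le (div_nonneg (sub_nonneg.mpr (ha k hk)) hδ.le))
    linarith
  calc ∑ k ∈ s, φ (d k) ≤ ∑ k ∈ s, φ (a + δ * slot k) := sum_le_sum fun k hk =>
        hφ_anti (Set.mem_Ici.mpr (le_add_of_nonneg_right (by positivity)))
          (Set.mem_Ici.mpr (ha k hk)) (hslot k hk)
    _ = ∑ l ∈ s.image slot, φ (a + δ * l) :=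
        (sum_image (f := fun l : ℕ => φ (a + δ * l))
          (injOn_floor_div_of_separated hδ ha hsep)).symm
    _ ≤ ∑' l : ℕ, φ (a + δ * l) := hsum.sum_le_tsum _ fun l _ => hφ_nonneg _

lemma sum_abs_sub_le_two_mul_tsum_of_separated {x : ι → ℝ} {ν : ℝ} (hδ : 0 < δ)
    (ha : ∀ k ∈ s, a ≤ |ν - x k|)
    (hsep : ∀ k ∈ s, ∀ k' ∈ s, k ≠ k' → δ ≤ |x k - x k'|)
    (hφ_anti : AntitoneOn φ (Set.Ici a)) (hφ_nonneg : ∀ x, 0 ≤ φ x)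
    (hsum : Summable fun l : ℕ => φ (a + δ * l)) :
    ∑ k ∈ s, φ |ν - x k| ≤ 2 * ∑' l : ℕ, φ (a + δ * l) := by
  have one_side : ∀ t ⊆ s,
      (∀ k ∈ t, ∀ k' ∈ t, |(|ν - x k| - |ν - x k'|)| = |x k - x k'|) →
      ∑ k ∈ t, φ |ν - x k| ≤ ∑' l : ℕ, φ (a + δ * l) := fun t hts hside =>
    sum_le_tsum_of_separated hδ (fun k hk => ha k (hts hk))
      (fun k hk k' hk' hne => hside k hk k' hk' ▸ hsep k (hts hk) k' (hts hk') hne)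
      hφ_anti hφ_nonneg hsum
  rw [← sum_filter_add_sum_filter_not s (fun k => ν < x k), two_mul]
  refine add_le_add (one_side _ (filter_subset _ _) fun k hk k' hk' => ?_)
    (one_side _ (filter_subset _ _) fun k hk k' hk' => ?_)
  · simp only [mem_filter] at hk hk'
    rw [abs_sub_comm ν, abs_of_pos (sub_pos.mpr hk.2), abs_sub_comm ν,
      abs_of_pos (sub_pos.mpr hk'.2), sub_sub_sub_cancel_right]
  · simp only [mem_filter, not_lt] at hk hk'
    rw [abs_of_nonneg (sub_nonneg.mpr hk.2), abs_of_nonneg (sub_nonneg.mpr hk'.2),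
      sub_sub_sub_cancel_left, abs_sub_comm]

end Packing

/-- Leakage noise floor bound: away from all signal frequencies (distance ≥ 2/T), the
windowed spectrum `H(ν) = (1/T)(Σ_k c_k w̃(ν-ν_k) + ε̃(ν))` satisfies
`|H(ν)| ≤ ‖c‖_∞ (2/T) Σ_{l≥0} φ(2/T + 4l/T) + sup_ν |ε̃(ν)|/T`. -/
theorem leakage_noise_floor (T : ℝ) (hT : 0 < T) (p : ℕ)
    (c : Fin (p + 1) → ℂ) (wt : ℝ → ℂ) (φ : ℝ → ℝ)
    (hφ_anti : AntitoneOn φ (Set.Ici 0)) (hφ_nonneg : ∀ x, 0 ≤ φ x)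
    (henv : ∀ ν : ℝ, ‖wt ν‖ ≤ φ |ν|)
    (hsum : Summable fun l : ℕ => φ (2 / T + 4 * (l : ℝ) / T))
    (νf : Fin (p + 1) → ℝ)
    (hsep : ∀ k k' : Fin (p + 1), k ≠ k' → 4 / T ≤ |νf k - νf k'|)
    (ε : ℝ → ℂ)
    (hε_bdd : BddAbove (Set.range fun ν : ℝ => ‖ε ν‖ / T))
    (ν : ℝ) (hν : ∀ k : Fin (p + 1), 2 / T ≤ |ν - νf k|) :
    ‖(1 / T) * (∑ k, c k * wt (ν - νf k) + ε ν)‖ ≤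
      (Finset.univ.sup' Finset.univ_nonempty fun k => ‖c k‖) *
          ((2 / T) * ∑' l : ℕ, φ (2 / T + 4 * (l : ℝ) / T)) +
        ⨆ ν' : ℝ, ‖ε ν'‖ / T := by
  set C := univ.sup' univ_nonempty fun k => ‖c k‖
  set S := ∑' l : ℕ, φ (2 / T + 4 * (l : ℝ) / T)
  have hC : ∀ k, ‖c k‖ ≤ C := fun k => le_sup' (fun k => ‖c k‖) (mem_univ k)
  have hleak : ∑ k, φ |ν - νf k| ≤ 2 * S := by
    simp only [S, mul_div_right_comm (4 : ℝ)] at hsum ⊢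
    exact sum_abs_sub_le_two_mul_tsum_of_separated (by positivity) (fun k _ => hν k)
      (fun k _ k' _ => hsep k k') (hφ_anti.mono (Set.Ici_subset_Ici.mpr (by positivity)))
      hφ_nonneg hsum
  have hsignal : ‖∑ k, c k * wt (ν - νf k)‖ ≤ C * (2 * S) := calc
    _ ≤ ∑ k, C * φ |ν - νf k| := norm_sum_le_of_le _ fun k _ => by
        rw [norm_mul]
        exact mul_le_mul (hC k) (henv _) (norm_nonneg _) ((norm_nonneg _).trans (hC k))
    _ ≤ C * (2 * S) := by
        rw [← mul_sum]
        exact mul_le_mul_of_nonneg_left hleak ((norm_nonneg _).trans (hC 0))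
  calc ‖(1 / T) * (∑ k, c k * wt (ν - νf k) + ε ν)‖
      = ‖∑ k, c k * wt (ν - νf k) + ε ν‖ / T := by
        rw [norm_mul, norm_div, norm_one, Complex.norm_real, Real.norm_of_nonneg hT.le,
          one_div_mul_eq_div]
    _ ≤ (C * (2 * S) + ‖ε ν‖) / T := by
        gcongr
        exact (norm_add_le _ _).trans (add_le_add hsignal le_rfl)
    _ = C * ((2 / T) * S) + ‖ε ν‖ / T := by ring
    _ ≤ C * ((2 / T) * S) + ⨆ ν' : ℝ, ‖ε ν'‖ / T :=
        add_le_add le_rfl (le_ciSup hε_bdd ν)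
end

section
/- Under the setup H(ν) = (1/T)Σ_{k=0}^p c_k w̃(ν - ν_k) + ε̃(ν)/T with min_{k≠k'}|ν_k - ν_{k'}| ≥ 4/T, define S_2 = (2/T)Σ_{l=1}^∞ sup_{|ν| ≥ 4l/T} |w̃(ν)|. If j maximizes |c_j|, then (|w̃(0)|/T)·‖c‖_∞ ≤ |H(ν_j)| + S_2·‖c‖_∞ + sup_ν |ε̃(ν)|/T, and hence (|w̃(0)|/T - S_2)·‖c‖_∞ - sup_ν |ε̃(ν)|/T ≤ sup_ν |H(ν)|. -/
/-! At the strongest frequency `ν_j` the term `c_j w̃(0) / T` of `H(ν_j)` is isolated, and the other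
terms leak at most `‖c‖_∞ / T · Σ_{k ≠ j} |w̃(ν_j - ν_k)|`. On either side of `ν_j`, the frequencies
listed by increasing distance from `ν_j` have their `l`-th one (from `0`) at distance at least
`4 (l + 1) / T`, by the separation; so each side contributes at most
`Σ_l sup_{|ν| ≥ 4 (l + 1) / T} |w̃(ν)|`. -/

open Finset

namespace Finset

theorem mul_succ_le_orderEmbOfFin {s : Finset ℝ} {δ : ℝ} (hs : ∀ x ∈ s, δ ≤ x)
    (hsep : ∀ x ∈ s, ∀ y ∈ s, x < y → δ ≤ y - x) {n : ℕ} (h : #s = n) (i : Fin n) :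
    δ * ((i : ℝ) + 1) ≤ s.orderEmbOfFin h i := by
  obtain _ | n := n
  · exact i.elim0
  induction i using Fin.induction with
  | zero => simpa using hs _ (s.orderEmbOfFin_mem h 0)
  | succ i ih =>
    have hstep := hsep _ (s.orderEmbOfFin_mem h _) _ (s.orderEmbOfFin_mem h _)
      ((s.orderEmbOfFin h).strictMono i.castSucc_lt_succ)
    rw [Fin.val_castSucc] at ih
    rw [Fin.val_succ]
    push_cast
    linarith

theorem sum_le_tsum_of_separated (s : Finset ℝ) (g : ℝ → ℝ) {S : ℕ → ℝ} {δ : ℝ}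
    (hs : ∀ x ∈ s, δ ≤ x) (hsep : ∀ x ∈ s, ∀ y ∈ s, x < y → δ ≤ y - x)
    (hg : ∀ (l : ℕ) (x : ℝ), δ * ((l : ℝ) + 1) ≤ x → g x ≤ S l)
    (hS : ∀ l, 0 ≤ S l) (hS_sum : Summable S) :
    ∑ x ∈ s, g x ≤ ∑' l, S l :=
  calc ∑ x ∈ s, g x = ∑ i, g (s.orderEmbOfFin rfl i) := by
        conv_lhs => rw [← s.map_orderEmbOfFin_univ rfl]
        rw [sum_map]; rfl
    _ ≤ ∑ i : Fin #s, S i :=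
        sum_le_sum fun i _ => hg _ _ (mul_succ_le_orderEmbOfFin hs hsep rfl i)
    _ = ∑ l ∈ range #s, S l := Fin.sum_univ_eq_sum_range S _
    _ ≤ ∑' l, S l := hS_sum.sum_le_tsum _ fun l _ => hS l

theorem sum_comp_le_tsum_of_separated {ι : Type*} (t : Finset ι) (x : ι → ℝ) (g : ℝ → ℝ)
    {S : ℕ → ℝ} {δ : ℝ} (hδ : 0 < δ) (hx : ∀ k ∈ t, δ ≤ x k)
    (hsep : ∀ k ∈ t, ∀ k' ∈ t, k ≠ k' → δ ≤ |x k - x k'|)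
    (hg : ∀ (l : ℕ) (y : ℝ), δ * ((l : ℝ) + 1) ≤ y → g y ≤ S l)
    (hS : ∀ l, 0 ≤ S l) (hS_sum : Summable S) :
    ∑ k ∈ t, g (x k) ≤ ∑' l, S l := by
  have hinj : Set.InjOn x t := fun k hk k' hk' hkk' => by
    by_contra hne
    have := hsep k hk k' hk' hne
    rw [hkk', sub_self, abs_zero] at this
    linarith
  rw [← sum_image hinj]
  refine sum_le_tsum_of_separated _ g ?_ ?_ hg hS hS_sum
  · simpa using hx
  · simp only [mem_image, forall_exists_index, and_imp, forall_apply_eq_imp_iff₂]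
    intro k hk k' hk' hlt
    simpa [abs_of_neg (sub_neg.mpr hlt), abs_sub_comm] using
      hsep k hk k' hk' (by rintro rfl; exact lt_irrefl _ hlt)

theorem sum_le_two_mul_tsum_of_separated {ι : Type*} (t : Finset ι) (ν : ι → ℝ) (ν₀ : ℝ)
    (g : ℝ → ℝ) {S : ℕ → ℝ} {δ : ℝ} (hδ : 0 < δ) (h₀ : ∀ k ∈ t, δ ≤ |ν k - ν₀|)
    (hsep : ∀ k ∈ t, ∀ k' ∈ t, k ≠ k' → δ ≤ |ν k - ν k'|)
    (hg : ∀ (l : ℕ) (y : ℝ), δ * ((l : ℝ) + 1) ≤ |y| → g y ≤ S l)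
    (hS : ∀ l, 0 ≤ S l) (hS_sum : Summable S) :
    ∑ k ∈ t, g (ν₀ - ν k) ≤ 2 * ∑' l, S l := by
  rw [← sum_filter_add_sum_filter_not t (fun k => ν₀ < ν k), two_mul]
  gcongr ?_ + ?_
  · have hright := sum_comp_le_tsum_of_separated {k ∈ t | ν₀ < ν k} (fun k => ν k - ν₀)
      (fun y => g (-y)) hδ ?_ ?_
      (fun l y hy => hg l _ (by rwa [abs_neg, abs_of_nonneg (hy.trans' (by positivity))])) hS hS_sum
    · simpa only [neg_sub] using hright
    · intro k hk
      obtain ⟨hk, hlt⟩ := mem_filter.mp hk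
      simpa [abs_of_pos (sub_pos.mpr hlt)] using h₀ k hk
    · intro k hk k' hk' hne
      simpa using hsep k (mem_filter.mp hk).1 k' (mem_filter.mp hk').1 hne
  · refine sum_comp_le_tsum_of_separated _ (fun k => ν₀ - ν k) g hδ ?_ ?_
      (fun l y hy => hg l _ (by rwa [abs_of_nonneg (hy.trans' (by positivity))])) hS hS_sum
    · intro k hk
      obtain ⟨hk, hle⟩ := mem_filter.mp hk
      simpa [abs_sub_comm, abs_of_nonneg (sub_nonneg.mpr (not_lt.mp hle))] using h₀ k hk
    · intro k hk k' hk' hne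
      simpa [abs_sub_comm] using hsep k (mem_filter.mp hk).1 k' (mem_filter.mp hk').1 hne

end Finset

noncomputable def tailSup (w : ℝ → ℂ) (r : ℝ) : ℝ :=
  sSup ((fun ν => ‖w ν‖) '' {ν | r ≤ |ν|})

theorem tailSup_nonneg (w : ℝ → ℂ) (r : ℝ) : 0 ≤ tailSup w r :=
  Real.sSup_nonneg <| by
    rintro _ ⟨ν, -, rfl⟩
    exact norm_nonneg _

theorem norm_le_tailSup {w : ℝ → ℂ} {r ν : ℝ}
    (hw : BddAbove ((fun ν => ‖w ν‖) '' {ν | r ≤ |ν|})) (hν : r ≤ |ν|) :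
    ‖w ν‖ ≤ tailSup w r :=
  le_csSup hw ⟨ν, hν, rfl⟩

theorem norm_div_mul_le_of_eq_div_mul_sum_add {ι : Type*} [Fintype ι] [DecidableEq ι]
    {T : ℝ} (hT : 0 < T) {c : ι → ℂ} {w : ℝ → ℂ} {ν : ι → ℝ} {h e : ℂ} {j : ι}
    (hj : ∀ k, ‖c k‖ ≤ ‖c j‖) (hh : h = (1 / T) * ∑ k, c k * w (ν j - ν k) + e / T) :
    ‖w 0‖ / T * ‖c j‖ ≤ ‖h‖ + ‖c j‖ / T * ∑ k ∈ univ.erase j, ‖w (ν j - ν k)‖ + ‖e‖ / T := by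
  set R := ∑ k ∈ univ.erase j, c k * w (ν j - ν k)
  have hdiag : c j * w 0 = T * h - R - e := by
    have hT' : (T : ℂ) ≠ 0 := by exact_mod_cast hT.ne'
    rw [hh, ← add_sum_erase _ _ (mem_univ j), sub_self]
    field_simp
    ring
  have hR : ‖R‖ ≤ ‖c j‖ * ∑ k ∈ univ.erase j, ‖w (ν j - ν k)‖ :=
    calc ‖R‖ ≤ ∑ k ∈ univ.erase j, ‖c k‖ * ‖w (ν j - ν k)‖ :=
          norm_sum_le_of_le _ fun k _ => (norm_mul _ _).le
      _ ≤ _ := by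
        rw [mul_sum]
        gcongr with k
        exact hj k
  have hscaled : ‖c j‖ * ‖w 0‖ ≤ T * ‖h‖ + ‖c j‖ * ∑ k ∈ univ.erase j, ‖w (ν j - ν k)‖ + ‖e‖ :=
    calc ‖c j‖ * ‖w 0‖ = ‖T * h - R - e‖ := by rw [← norm_mul, hdiag]
      _ ≤ ‖(T : ℂ) * h‖ + ‖R‖ + ‖e‖ :=
          (norm_sub_le _ _).trans (add_le_add_left (norm_sub_le _ _) _)
      _ ≤ _ := by
        rw [norm_mul, Complex.norm_real, Real.norm_of_nonneg hT.le]
        gcongr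
  calc ‖w 0‖ / T * ‖c j‖ = ‖c j‖ * ‖w 0‖ / T := by ring
    _ ≤ (T * ‖h‖ + ‖c j‖ * ∑ k ∈ univ.erase j, ‖w (ν j - ν k)‖ + ‖e‖) / T := by gcongr
    _ = _ := by field_simp

/-- Lower bound on the peak of the windowed spectrum: with
`H(ν) = (1/T) Σ_k c_k w̃(ν-ν_k) + ε̃(ν)/T`, frequencies pairwise `4/T`-separated,
`S₂ = (2/T) Σ_{l≥1} sup_{|ν| ≥ 4l/T} |w̃(ν)|`, and `j` maximizing `|c_j|`:
`(|w̃(0)|/T)‖c‖_∞ ≤ |H(ν_j)| + S₂‖c‖_∞ + sup_ν |ε̃(ν)|/T`, hence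
`(|w̃(0)|/T - S₂)‖c‖_∞ - sup_ν |ε̃(ν)|/T ≤ sup_ν |H(ν)|`. -/
theorem spectrum_peak_lower_bound (T : ℝ) (hT : 0 < T) (p : ℕ)
    (c : Fin (p + 1) → ℂ) (wt : ℝ → ℂ) (ε : ℝ → ℂ) (H : ℝ → ℂ)
    (νf : Fin (p + 1) → ℝ)
    (hH : ∀ ν : ℝ, H ν = (1 / T) * ∑ k, c k * wt (ν - νf k) + ε ν / T)
    (hsep : ∀ k k' : Fin (p + 1), k ≠ k' → 4 / T ≤ |νf k - νf k'|)
    (hwt_bdd : ∀ l : ℕ, BddAbove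
      ((fun ν : ℝ => ‖wt ν‖) '' {ν : ℝ | 4 * ((l : ℝ) + 1) / T ≤ |ν|}))
    (hwt_sum : Summable fun l : ℕ =>
      sSup ((fun ν : ℝ => ‖wt ν‖) '' {ν : ℝ | 4 * ((l : ℝ) + 1) / T ≤ |ν|}))
    (hε_bdd : BddAbove (Set.range fun ν : ℝ => ‖ε ν‖ / T))
    (hH_bdd : BddAbove (Set.range fun ν : ℝ => ‖H ν‖))
    (j : Fin (p + 1)) (hj : ∀ k, ‖c k‖ ≤ ‖c j‖) :
    (‖wt 0‖ / T) * ‖c j‖ ≤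
        ‖H (νf j)‖ +
          ((2 / T) * ∑' l : ℕ,
              sSup ((fun ν : ℝ => ‖wt ν‖) '' {ν : ℝ | 4 * ((l : ℝ) + 1) / T ≤ |ν|})) *
            ‖c j‖ +
          (⨆ ν : ℝ, ‖ε ν‖ / T) ∧
    (‖wt 0‖ / T -
          (2 / T) * ∑' l : ℕ,
            sSup ((fun ν : ℝ => ‖wt ν‖) '' {ν : ℝ | 4 * ((l : ℝ) + 1) / T ≤ |ν|})) *
        ‖c j‖ - (⨆ ν : ℝ, ‖ε ν‖ / T) ≤
      ⨆ ν : ℝ, ‖H ν‖ := by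
  set S : ℕ → ℝ := fun l =>
    sSup ((fun ν : ℝ => ‖wt ν‖) '' {ν : ℝ | 4 * ((l : ℝ) + 1) / T ≤ |ν|})
  have hleak : ∑ k ∈ univ.erase j, ‖wt (νf j - νf k)‖ ≤ 2 * ∑' l, S l :=
    sum_le_two_mul_tsum_of_separated _ νf (νf j) (fun ν => ‖wt ν‖) (δ := 4 / T) (by positivity)
      (fun k hk => hsep k j (ne_of_mem_erase hk)) (fun k _ k' _ => hsep k k')
      (fun l ν hν => norm_le_tailSup (hwt_bdd l) (by rwa [mul_div_right_comm]))
      (fun l => tailSup_nonneg _ _) hwt_sum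
  have hpeak : ‖wt 0‖ / T * ‖c j‖ ≤
      ‖H (νf j)‖ + (2 / T * ∑' l, S l) * ‖c j‖ + ⨆ ν, ‖ε ν‖ / T :=
    calc _ ≤ _ := norm_div_mul_le_of_eq_div_mul_sum_add hT hj (hH (νf j))
      _ ≤ ‖H (νf j)‖ + ‖c j‖ / T * (2 * ∑' l, S l) + ⨆ ν, ‖ε ν‖ / T := by
        gcongr
        exact le_ciSup hε_bdd (νf j)
      _ = _ := by ring
  exact ⟨hpeak, by linarith [le_ciSup hH_bdd (νf j)]⟩
end
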